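/- Let m ≥ 0 and let α_1, …, α_m be complex numbers of modulus 1. If the sequence n ↦ α_1^n + ⋯ + α_m^n converges as n → ∞, then α_i = 1 for every i, and in particular the limit equals m. -/

import Mathlib

/-!
The Cesàro means of `zⁿ` on the closed unit disc tend to `1` if `z = 1` and to `0` otherwise
(the geometric sums stay bounded), so the limit of a convergent sum `∑ αᵢⁿ` equals the number of
`αᵢ = 1`. Subtracting those, `Tₙ = ∑_{αᵢ ≠ 1} αᵢⁿ` tends to `0`, hence so does
`|Tₙ|² = ∑ᵢⱼ (αᵢ conj αⱼ)ⁿ`; but by the same Cesàro argument the limit of the latter is the number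
of pairs with `αᵢ = αⱼ`, which is at least the number of indices with `αᵢ ≠ 1`.
-/

open Filter Finset Topology

section

variable {𝕜 : Type*} [RCLike 𝕜]

lemma norm_geom_sum_le {z : 𝕜} (hz : ‖z‖ ≤ 1) (h1 : z ≠ 1) (n : ℕ) :
    ‖∑ k ∈ range n, z ^ k‖ ≤ 2 / ‖z - 1‖ := by
  rw [geom_sum_eq h1, norm_div]
  gcongr
  calc ‖z ^ n - 1‖ ≤ ‖z ^ n‖ + ‖(1 : 𝕜)‖ := norm_sub_le _ _
    _ ≤ 1 + 1 := by
      gcongr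
      · rw [norm_pow]; exact pow_le_one₀ (norm_nonneg z) hz
      · simp
    _ = 2 := by norm_num

lemma tendsto_cesaro_pow {z : 𝕜} (hz : ‖z‖ ≤ 1) :
    Tendsto (fun n : ℕ => (n⁻¹ : ℝ) • ∑ k ∈ range n, z ^ k) atTop
      (𝓝 (if z = 1 then 1 else 0)) := by
  split_ifs with h1
  · subst h1
    refine tendsto_const_nhds.congr' ?_
    filter_upwards [eventually_ne_atTop 0] with n hn
    simp [RCLike.real_smul_eq_coe_mul, hn]
  · exact tendsto_inv_atTop_nhds_zero_nat.zero_smul_isBoundedUnder_le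
      (isBoundedUnder_of ⟨_, norm_geom_sum_le hz h1⟩)

lemma tendsto_cesaro_sum_pow {ι : Type*} (s : Finset ι) {β : ι → 𝕜} (hβ : ∀ i ∈ s, ‖β i‖ ≤ 1) :
    Tendsto (fun n : ℕ => (n⁻¹ : ℝ) • ∑ k ∈ range n, ∑ i ∈ s, β i ^ k) atTop
      (𝓝 (#{i ∈ s | β i = 1} : 𝕜)) := by
  classical
  have h := tendsto_finsetSum s fun i hi => tendsto_cesaro_pow (hβ i hi)
  simp only [← smul_sum, sum_boole] at h
  simpa only [sum_comm (s := range _)] using h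

lemma eq_card_of_tendsto_sum_pow {ι : Type*} (s : Finset ι) {β : ι → 𝕜}
    (hβ : ∀ i ∈ s, ‖β i‖ ≤ 1) {L : 𝕜}
    (h : Tendsto (fun n : ℕ => ∑ i ∈ s, β i ^ n) atTop (𝓝 L)) :
    L = #{i ∈ s | β i = 1} :=
  tendsto_nhds_unique h.cesaro_smul (tendsto_cesaro_sum_pow s hβ)

open RCLike ComplexConjugate in
lemma eq_empty_of_tendsto_sum_pow_zero {ι : Type*} (s : Finset ι) {β : ι → 𝕜}
    (hβ : ∀ i ∈ s, ‖β i‖ = 1)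
    (h : Tendsto (fun n : ℕ => ∑ i ∈ s, β i ^ n) atTop (𝓝 0)) :
    s = ∅ := by
  have hdiag : ∀ i ∈ s, β i * conj (β i) = 1 := fun i hi => by
    rw [mul_conj, hβ i hi]; norm_num
  have hsq : Tendsto (fun n : ℕ => ∑ p ∈ s ×ˢ s, (β p.1 * conj (β p.2)) ^ n) atTop (𝓝 0) := by
    have := h.mul (continuous_conj.tendsto 0 |>.comp h)
    simp only [map_zero, mul_zero] at this
    refine this.congr fun n => ?_
    simp only [Function.comp_apply, map_sum, map_pow, sum_mul_sum, sum_product, mul_pow]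
  have hcard := eq_card_of_tendsto_sum_pow (s ×ˢ s) (fun p hp => by
    rw [norm_mul, norm_conj, hβ _ (mem_product.1 hp).1, hβ _ (mem_product.1 hp).2, one_mul]) hsq
  rw [eq_comm, Nat.cast_eq_zero, card_eq_zero, filter_eq_empty_iff] at hcard
  exact eq_empty_of_forall_notMem fun i hi => hcard (x := (i, i)) (mem_product.2 ⟨hi, hi⟩) (hdiag i hi)

end

theorem stmt_8 (m : ℕ) (α : Fin m → ℂ) (hα : ∀ i, ‖α i‖ = 1) (L : ℂ)
    (hconv : Filter.Tendsto (fun n : ℕ => ∑ i, α i ^ n) Filter.atTop (nhds L)) :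
    (∀ i, α i = 1) ∧ L = m := by
  have hL := eq_card_of_tendsto_sum_pow univ (fun i _ => (hα i).le) hconv
  have hsplit : ∀ n : ℕ, ∑ i ∈ {i | α i ≠ 1}, α i ^ n = (∑ i, α i ^ n) - #{i | α i = 1} := fun n => by
    have hone : ∑ i ∈ {i | α i = 1}, α i ^ n = #{i | α i = 1} := by
      rw [sum_congr rfl fun i hi => by rw [(mem_filter.1 hi).2, one_pow], sum_const, nsmul_one]
    rw [← sum_filter_add_sum_filter_not univ (α · = 1), hone, add_sub_cancel_left]
  have hB := eq_empty_of_tendsto_sum_pow_zero {i | α i ≠ 1} (fun i _ => hα i) <| by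
    simpa [hsplit, ← hL] using hconv.sub_const L
  have hall : ∀ i, α i = 1 := by simpa [filter_eq_empty_iff] using hB
  refine ⟨hall, ?_⟩
  simpa [hall] using hL
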